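/- arXiv:math/0406394 — 6 statements merged into one kernel-verified Lean document; each statement's English description precedes it below -/
import Mathlib

section
/- For every integer k ≥ 3 there exist k²−1 points in the closed unit square [0,1]² whose pairwise distances are all at least 1/(k − 3 + √(2 + √3)). -/
/-!
Work in units of the disk diameter and let `c = cos 15°`, `s = sin 15°`. Take the
`(k-1) × (k-1)` grid on the coordinates `0, 2c, 2c + 1, …, 2c + k - 3`, whose first gap has
width `2c`, and insert into that gap a column at abscissa `c` with ordinates
`s, 2c - s, 2c - s + 1, …`, and symmetrically a row. Within each family two points differ by at
least `1` in some coordinate. A column point is offset from every grid point by at least `c`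
horizontally and `s` vertically, and `c² + s² = 1`; the column and the row are offset from each
other by at least `c - s` in both coordinates, and `2 (c - s)² = 2 - 2 sin 30° = 1`. All points
lie in a square of side `k - 3 + 2c = k - 3 + √(2 + √3)`, which is rescaled to the unit square.
-/

open Real Set

lemma le_abs_sub_of_forall_add_le_succ {f : ℕ → ℝ} {d : ℝ} (hd : 0 ≤ d)
    (hf : ∀ t, f t + d ≤ f (t + 1)) {a b : ℕ} (hab : a ≠ b) : d ≤ |f a - f b| := by
  have hmono : Monotone f := monotone_nat_of_le_succ fun t => by linarith [hf t]
  rcases hab.lt_or_gt with h | h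
  · rw [abs_sub_comm]
    exact (by linarith [hf a, hmono (Nat.succ_le_of_lt h)] : d ≤ f b - f a).trans (le_abs_self _)
  · exact (by linarith [hf b, hmono (Nat.succ_le_of_lt h)] : d ≤ f a - f b).trans (le_abs_self _)

lemma one_le_dist_of_le_abs_sub {x y x' y' u v : ℝ} (hu : 0 ≤ u) (hv : 0 ≤ v)
    (huv : 1 ≤ u ^ 2 + v ^ 2) (hx : u ≤ |x - x'|) (hy : v ≤ |y - y'|) :
    1 ≤ dist !₂[x, y] !₂[x', y'] := by
  rw [EuclideanSpace.dist_eq, Fin.sum_univ_two, one_le_sqrt]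
  simp only [Matrix.cons_val_zero, Matrix.cons_val_one, Real.dist_eq, sq_abs]
  nlinarith [pow_le_pow_left₀ hu hx 2, pow_le_pow_left₀ hv hy 2, sq_abs (x - x'),
    sq_abs (y - y')]

lemma exists_fin_rescaled_of_one_le_dist {ι κ : Type*} [Fintype κ] {n : ℕ} (e : ι ≃ Fin n)
    {p : ι → EuclideanSpace ℝ κ} {L : ℝ} (hL : 0 < L) (hmem : ∀ i t, p i t ∈ Icc 0 L)
    (hsep : Pairwise fun i j => 1 ≤ dist (p i) (p j)) :
    ∃ f : Fin n → EuclideanSpace ℝ κ, (∀ i t, f i t ∈ Icc (0 : ℝ) 1) ∧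
      ∀ i j, i ≠ j → 1 / L ≤ dist (f i) (f j) := by
  refine ⟨fun i => L⁻¹ • p (e.symm i), fun i t => ?_, fun i j hij => ?_⟩
  · obtain ⟨h0, h1⟩ := hmem (e.symm i) t
    simp only [PiLp.smul_apply, smul_eq_mul, mem_Icc]
    exact ⟨by positivity, by rwa [inv_mul_le_iff₀ hL, mul_one]⟩
  · rw [dist_smul₀, Real.norm_of_nonneg (inv_nonneg.mpr hL.le), one_div]
    exact le_mul_of_one_le_right (inv_nonneg.mpr hL.le) (hsep (e.symm.injective.ne hij))

lemma Real.cos_pi_div_twelve : cos (π / 12) = √(2 + √3) / 2 := by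
  have hsq : cos (π / 12) ^ 2 = (2 + √3) / 4 := by
    rw [cos_sq, show 2 * (π / 12) = π / 6 by ring, cos_pi_div_six]; ring
  have hnonneg : 0 ≤ cos (π / 12) :=
    cos_nonneg_of_neg_pi_div_two_le_of_le (by linarith [pi_pos]) (by linarith [pi_pos])
  rw [← sqrt_sq hnonneg, hsq, sqrt_div' _ (by norm_num : (0:ℝ) ≤ 4),
    show (4 : ℝ) = 2 ^ 2 by norm_num, sqrt_sq (by norm_num)]

lemma sin_pi_div_twelve_nonneg : 0 ≤ sin (π / 12) :=
  sin_nonneg_of_nonneg_of_le_pi (by positivity) (by linarith [pi_pos])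

lemma sin_pi_div_twelve_le_half : sin (π / 12) ≤ 1 / 2 := by
  rw [← sin_pi_div_six]
  exact sin_le_sin_of_le_of_le_pi_div_two (by linarith [pi_pos]) (by linarith [pi_pos])
    (by linarith [pi_pos])

lemma half_le_cos_pi_div_twelve : 1 / 2 ≤ cos (π / 12) := by
  rw [← cos_pi_div_three]
  exact cos_le_cos_of_nonneg_of_le_pi (by positivity) (by linarith [pi_pos])
    (by linarith [pi_pos])

lemma two_mul_sq_cos_sub_sin_pi_div_twelve : 2 * (cos (π / 12) - sin (π / 12)) ^ 2 = 1 := by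
  have h := sin_two_mul (π / 12)
  rw [show 2 * (π / 12) = π / 6 by ring, sin_pi_div_six] at h
  nlinarith [cos_sq_add_sin_sq (π / 12)]

lemma one_le_two_mul_cos_sub_sin_pi_div_twelve : 1 ≤ 2 * (cos (π / 12) - sin (π / 12)) := by
  nlinarith [two_mul_sq_cos_sub_sin_pi_div_twelve, sin_pi_div_twelve_le_half,
    half_le_cos_pi_div_twelve]

def packingCoord (c r : ℝ) : ℕ → ℝ
  | 0 => r
  | t + 1 => 2 * c - r + t

section packingCoord

variable {c r : ℝ}

lemma one_le_abs_packingCoord_sub (h : 1 ≤ 2 * (c - r)) {a b : ℕ} (hab : a ≠ b) :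
    1 ≤ |packingCoord c r a - packingCoord c r b| := by
  refine le_abs_sub_of_forall_add_le_succ zero_le_one (fun t => ?_) hab
  cases t <;> simp only [packingCoord] <;> push_cast <;> linarith

lemma abs_packingCoord_sub_packingCoord (r' : ℝ) (t : ℕ) :
    |packingCoord c r t - packingCoord c r' t| = |r - r'| := by
  cases t
  · rfl
  · simp only [packingCoord]; rw [abs_sub_comm]; ring_nf

lemma sub_le_abs_packingCoord_sub (t : ℕ) : c - r ≤ |packingCoord c r t - c| := by
  cases t with
  | zero => rw [abs_sub_comm]; exact le_abs_self _
  | succ t =>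
    simp only [packingCoord]
    exact (by linarith [t.cast_nonneg (α := ℝ)] : c - r ≤ 2 * c - r + t - c).trans
      (le_abs_self _)

lemma packingCoord_mem_Icc (hr : 0 ≤ r) (h : r ≤ c) {n t : ℕ} (ht : t ≤ n + 1) :
    packingCoord c r t ∈ Icc 0 (n + 2 * c) := by
  cases t with
  | zero => exact ⟨hr, by simp only [packingCoord]; linarith [n.cast_nonneg (α := ℝ)]⟩
  | succ t =>
    have : (t : ℝ) ≤ n := by exact_mod_cast Nat.le_of_succ_le_succ ht
    simp only [packingCoord, mem_Icc]
    constructor <;> linarith [t.cast_nonneg (α := ℝ)]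

end packingCoord

lemma le_abs_packingCoord_zero_sub {c r : ℝ} (hc : 1 ≤ 2 * c) (hr : 0 ≤ r) (hr' : r ≤ 1 / 2)
    (a i : ℕ) : r ≤ |packingCoord c 0 a - packingCoord c r i| := by
  have hi := abs_packingCoord_sub_packingCoord (c := c) (r := 0) r i
  rw [zero_sub, abs_neg, abs_of_nonneg hr] at hi
  rcases eq_or_ne a i with rfl | hai
  · exact hi.ge
  · have hgrid := one_le_abs_packingCoord_sub (by rwa [sub_zero] : 1 ≤ 2 * (c - 0)) hai
    linarith [abs_sub_le (packingCoord c 0 a) (packingCoord c r i) (packingCoord c 0 i),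
      abs_sub_comm (packingCoord c r i) (packingCoord c 0 i)]

noncomputable def gridPacking (K : ℕ) :
    (Fin K × Fin K) ⊕ (Fin K ⊕ Fin K) → EuclideanSpace ℝ (Fin 2)
  | .inl (a, b) => !₂[packingCoord (cos (π / 12)) 0 a, packingCoord (cos (π / 12)) 0 b]
  | .inr (.inl i) => !₂[cos (π / 12), packingCoord (cos (π / 12)) (sin (π / 12)) i]
  | .inr (.inr j) => !₂[packingCoord (cos (π / 12)) (sin (π / 12)) j, cos (π / 12)]

lemma one_le_dist_gridPacking_grid_column {K : ℕ} (a b i : Fin K) :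
    1 ≤ dist (gridPacking K (.inl (a, b))) (gridPacking K (.inr (.inl i))) :=
  one_le_dist_of_le_abs_sub (by linarith [half_le_cos_pi_div_twelve]) sin_pi_div_twelve_nonneg
    (cos_sq_add_sin_sq _).ge
    (by simpa using sub_le_abs_packingCoord_sub (c := cos (π / 12)) (r := 0) a)
    (le_abs_packingCoord_zero_sub (by linarith [half_le_cos_pi_div_twelve])
      sin_pi_div_twelve_nonneg sin_pi_div_twelve_le_half b i)

lemma one_le_dist_gridPacking_grid_row {K : ℕ} (a b j : Fin K) :
    1 ≤ dist (gridPacking K (.inl (a, b))) (gridPacking K (.inr (.inr j))) :=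
  one_le_dist_of_le_abs_sub sin_pi_div_twelve_nonneg (by linarith [half_le_cos_pi_div_twelve])
    (by linarith [cos_sq_add_sin_sq (π / 12)])
    (le_abs_packingCoord_zero_sub (by linarith [half_le_cos_pi_div_twelve])
      sin_pi_div_twelve_nonneg sin_pi_div_twelve_le_half a j)
    (by simpa using sub_le_abs_packingCoord_sub (c := cos (π / 12)) (r := 0) b)

lemma one_le_dist_gridPacking_column_row {K : ℕ} (i j : Fin K) :
    1 ≤ dist (gridPacking K (.inr (.inl i))) (gridPacking K (.inr (.inr j))) := by
  have hcs := one_le_two_mul_cos_sub_sin_pi_div_twelve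
  refine one_le_dist_of_le_abs_sub (u := cos (π / 12) - sin (π / 12))
    (v := cos (π / 12) - sin (π / 12)) (by linarith) (by linarith)
    (by linarith [two_mul_sq_cos_sub_sin_pi_div_twelve]) ?_ (sub_le_abs_packingCoord_sub i)
  rw [abs_sub_comm]
  exact sub_le_abs_packingCoord_sub j

lemma one_le_dist_gridPacking {K : ℕ} {p q : (Fin K × Fin K) ⊕ (Fin K ⊕ Fin K)}
    (hpq : p ≠ q) : 1 ≤ dist (gridPacking K p) (gridPacking K q) := by
  have hgrid : 1 ≤ 2 * (cos (π / 12) - 0) := by linarith [half_le_cos_pi_div_twelve]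
  have hshift := one_le_two_mul_cos_sub_sin_pi_div_twelve
  rcases p with ⟨a, b⟩ | i | j <;> rcases q with ⟨a', b'⟩ | i' | j'
  · rcases eq_or_ne a a' with rfl | ha
    · have hb : (b : ℕ) ≠ b' := fun h => hpq (by rw [Fin.val_injective h])
      exact one_le_dist_of_le_abs_sub le_rfl zero_le_one (by norm_num) (by simp)
        (one_le_abs_packingCoord_sub hgrid hb)
    · exact one_le_dist_of_le_abs_sub zero_le_one le_rfl (by norm_num)
        (one_le_abs_packingCoord_sub hgrid (Fin.val_injective.ne ha)) (abs_nonneg _)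
  · exact one_le_dist_gridPacking_grid_column a b i'
  · exact one_le_dist_gridPacking_grid_row a b j'
  · exact dist_comm (gridPacking K _) _ ▸ one_le_dist_gridPacking_grid_column a' b' i
  · have hi : (i : ℕ) ≠ i' := fun h => hpq (by rw [Fin.val_injective h])
    exact one_le_dist_of_le_abs_sub le_rfl zero_le_one (by norm_num) (by simp)
      (one_le_abs_packingCoord_sub hshift hi)
  · exact one_le_dist_gridPacking_column_row i j'
  · exact dist_comm (gridPacking K _) _ ▸ one_le_dist_gridPacking_grid_row a' b' j
  · exact dist_comm (gridPacking K _) _ ▸ one_le_dist_gridPacking_column_row i' j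
  · have hj : (j : ℕ) ≠ j' := fun h => hpq (by rw [Fin.val_injective h])
    exact one_le_dist_of_le_abs_sub zero_le_one le_rfl (by norm_num)
      (one_le_abs_packingCoord_sub hshift hj) (by simp)

lemma gridPacking_mem_Icc {n : ℕ}
    (p : (Fin (n + 2) × Fin (n + 2)) ⊕ (Fin (n + 2) ⊕ Fin (n + 2))) (t : Fin 2) :
    gridPacking (n + 2) p t ∈ Icc 0 (n + 2 * cos (π / 12)) := by
  have hc := half_le_cos_pi_div_twelve
  have hs := sin_pi_div_twelve_le_half
  have hcoord : ∀ r, 0 ≤ r → r ≤ cos (π / 12) → ∀ a : Fin (n + 2),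
      packingCoord (cos (π / 12)) r a ∈ Icc 0 (n + 2 * cos (π / 12)) := fun r hr hrc a =>
    packingCoord_mem_Icc hr hrc (Nat.lt_succ_iff.mp a.isLt)
  have hconst : cos (π / 12) ∈ Icc 0 (n + 2 * cos (π / 12)) :=
    ⟨by linarith, by linarith [n.cast_nonneg (α := ℝ)]⟩
  have hgrid := hcoord 0 le_rfl (by linarith)
  have hshift := hcoord _ sin_pi_div_twelve_nonneg (by linarith)
  rcases p with ⟨a, b⟩ | i | j <;> fin_cases t <;> simp [gridPacking, hgrid, hshift, hconst]

/-- For every integer `k ≥ 3` there exist `k² - 1` points in the closed unit square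
whose pairwise distances are all at least `1 / (k - 3 + √(2 + √3))`. -/
theorem stmt_0 (k : ℕ) (hk : 3 ≤ k) :
    ∃ f : Fin (k ^ 2 - 1) → EuclideanSpace ℝ (Fin 2),
      (∀ i t, f i t ∈ Set.Icc (0 : ℝ) 1) ∧
      ∀ i j, i ≠ j →
        1 / ((k : ℝ) - 3 + Real.sqrt (2 + Real.sqrt 3)) ≤ dist (f i) (f j) := by
  obtain ⟨n, rfl⟩ : ∃ n, k = n + 3 := ⟨k - 3, by omega⟩
  have hcard : (n + 2) * (n + 2) + ((n + 2) + (n + 2)) = (n + 3) ^ 2 - 1 := by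
    rw [eq_tsub_iff_add_eq_of_le (by nlinarith)]; ring
  have hside : ((n + 3 : ℕ) : ℝ) - 3 + √(2 + √3) = n + 2 * cos (π / 12) := by
    rw [cos_pi_div_twelve]; push_cast; ring
  rw [hside]
  exact exists_fin_rescaled_of_one_le_dist
    (((Equiv.sumCongr finProdFinEquiv finSumFinEquiv).trans finSumFinEquiv).trans (finCongr hcard))
    (by linarith [half_le_cos_pi_div_twelve, n.cast_nonneg (α := ℝ)]) gridPacking_mem_Icc
    fun _ _ => one_le_dist_gridPacking
end

section
/- For every integer k ≥ 5 there exist k²−2 points in the closed unit square [0,1]² whose pairwise distances are all at least 1/(k − 5 + 2√(2 + √3)). -/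
/-!
Scale by `side = n + 2C`, where `k = n + 5`, `C = 2 cos 15° = √(2 + √3)` and
`D = 2 sin 15° = √(2 - √3)`, so that the points must be at distance `≥ 1`. Start from the
`(n + 3)²` points of the grid whose lines are at `0, C, C + 1, …, C + n, n + 2C`. In the strip of
width `C` below the second grid row put `n + 3` points at height `C/2`, each shifted by `D/2` from
a grid column: as `(C/2)² + (D/2)² = 1` they stay at distance `≥ 1` from the grid, and as
`C - D = √2` they stay apart from each other. Fill the other three outer strips by the symmetries of
the square, and add `((C + D)/2, (C + D)/2)`, at distance exactly `1` from `(C, C)`, `(D/2, C/2)`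
and `(C/2, D/2)` (as `C - D = √2`), with its image under the central reflection. This gives
`(n + 3)² + 4(n + 3) + 2 = k² - 2` points.
-/

namespace SquarePacking

noncomputable def C : ℝ := √(2 + √3)

noncomputable def D : ℝ := √(2 - √3)

lemma C_sq : C ^ 2 = 2 + √3 := Real.sq_sqrt (by positivity)

lemma D_sq : D ^ 2 = 2 - √3 := by
  have : √3 ≤ 2 := by rw [Real.sqrt_le_left (by norm_num)]; norm_num
  exact Real.sq_sqrt (by linarith)

lemma C_mul_D : C * D = 1 := by
  rw [C, D, ← Real.sqrt_mul (by positivity)]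
  have : (2 + √3) * (2 - √3) = 1 := by nlinarith [Real.sq_sqrt (show (0 : ℝ) ≤ 3 by norm_num)]
  rw [this, Real.sqrt_one]

lemma D_nonneg : 0 ≤ D := Real.sqrt_nonneg _

lemma D_le_one : D ≤ 1 :=
  Real.sqrt_le_one.2 (by linarith [Real.one_le_sqrt.2 (show (1 : ℝ) ≤ 3 by norm_num)])

lemma one_le_C_sub_D : 1 ≤ C - D := by
  have hDC : D ≤ C := Real.sqrt_le_sqrt (by linarith [Real.sqrt_nonneg 3])
  have h2 : (C - D) ^ 2 = 2 := by nlinarith [C_sq, D_sq, C_mul_D]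
  nlinarith

lemma half_C_sq_add_half_D_sq : (C / 2) ^ 2 + (D / 2) ^ 2 = 1 := by
  nlinarith [C_sq, D_sq]

lemma half_C_sub_D_sq_add_self : ((C - D) / 2) ^ 2 + ((C - D) / 2) ^ 2 = 1 := by
  nlinarith [C_sq, D_sq, C_mul_D]

variable (n : ℕ)

noncomputable def side : ℝ := n + 2 * C

noncomputable def gridCoord : ℕ → ℝ
  | 0 => 0
  | i + 1 => if i ≤ n then C + i else side n

noncomputable def shiftedCoord (i : ℕ) : ℝ :=
  if i ≤ n + 1 then gridCoord n i + D / 2 else side n - D / 2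

variable {n} {i j k l : ℕ}

@[simp] lemma gridCoord_zero : gridCoord n 0 = 0 := rfl

lemma gridCoord_last : gridCoord n (n + 2) = side n := by simp [gridCoord]

lemma side_sub_C : side n - C = n + C := by unfold side; ring

lemma C_le_side_sub_C : C ≤ side n - C := by
  rw [side_sub_C]; linarith [(Nat.cast_nonneg n : (0 : ℝ) ≤ n)]

lemma side_pos : 0 < side n := by
  linarith [C_le_side_sub_C (n := n), one_le_C_sub_D, D_nonneg]

lemma C_le_gridCoord (hi : i ≠ 0) : C ≤ gridCoord n i := by
  obtain ⟨i, rfl⟩ := Nat.exists_eq_add_one_of_ne_zero hi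
  simp only [gridCoord]
  split_ifs
  · linarith [(Nat.cast_nonneg i : (0 : ℝ) ≤ i)]
  · linarith [C_le_side_sub_C (n := n), one_le_C_sub_D, D_nonneg]

variable (n) in
lemma gridCoord_eq_zero_or_C_le (i : ℕ) : gridCoord n i = 0 ∨ C ≤ gridCoord n i := by
  rcases eq_or_ne i 0 with rfl | hi
  · exact Or.inl rfl
  · exact Or.inr (C_le_gridCoord hi)

lemma gridCoord_nonneg (i : ℕ) : 0 ≤ gridCoord n i := by
  rcases gridCoord_eq_zero_or_C_le n i with h | h <;> linarith [one_le_C_sub_D, D_nonneg]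

lemma gridCoord_le_side_sub_C (hi : i ≤ n + 1) : gridCoord n i ≤ side n - C := by
  rcases i with _ | i
  · linarith [C_le_side_sub_C (n := n), one_le_C_sub_D, D_nonneg, gridCoord_zero (n := n)]
  · simp only [gridCoord, if_pos (by omega : i ≤ n), side_sub_C]
    linarith [(Nat.cast_le.2 (by omega : i ≤ n) : (i : ℝ) ≤ n)]

lemma gridCoord_le_side (i : ℕ) : gridCoord n i ≤ side n := by
  rcases le_or_gt i (n + 1) with hi | hi
  · linarith [gridCoord_le_side_sub_C hi, one_le_C_sub_D, D_nonneg]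
  · obtain ⟨i, rfl⟩ := Nat.exists_eq_add_one_of_ne_zero (by omega : i ≠ 0)
    simp [gridCoord, show ¬ i ≤ n by omega]

lemma gridCoord_add_one_le (hij : i < j) (hj : j ≤ n + 2) :
    gridCoord n i + 1 ≤ gridCoord n j := by
  have hC : 1 ≤ C := by linarith [one_le_C_sub_D, D_nonneg]
  rcases eq_or_ne i 0 with rfl | hi
  · linarith [C_le_gridCoord (n := n) (by omega : j ≠ 0), gridCoord_zero (n := n)]
  rcases eq_or_lt_of_le hj with rfl | hj
  · linarith [gridCoord_le_side_sub_C (n := n) (by omega : i ≤ n + 1), gridCoord_last (n := n)]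
  obtain ⟨i, rfl⟩ := Nat.exists_eq_add_one_of_ne_zero hi
  obtain ⟨j, rfl⟩ := Nat.exists_eq_add_one_of_ne_zero (by omega : j ≠ 0)
  simp only [gridCoord, if_pos (by omega : i ≤ n), if_pos (by omega : j ≤ n)]
  have : (i : ℝ) + 1 ≤ j := by exact_mod_cast (by omega : i + 1 ≤ j)
  linarith

lemma one_le_abs_gridCoord_sub (hij : i ≠ j) (hi : i ≤ n + 2) (hj : j ≤ n + 2) :
    1 ≤ |gridCoord n i - gridCoord n j| := by
  rcases lt_or_gt_of_ne hij with h | h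
  · rw [abs_sub_comm, le_abs]; left; linarith [gridCoord_add_one_le h hj]
  · rw [le_abs]; left; linarith [gridCoord_add_one_le h hi]

lemma side_sub_gridCoord (hi : i ≤ n + 2) :
    side n - gridCoord n i = gridCoord n (n + 2 - i) := by
  rcases eq_or_ne i 0 with rfl | hi0
  · simp [gridCoord]
  rcases eq_or_lt_of_le hi with rfl | hi'
  · simp [gridCoord]
  obtain ⟨i, rfl⟩ := Nat.exists_eq_add_one_of_ne_zero hi0
  obtain ⟨j, hj⟩ : ∃ j, n + 2 - (i + 1) = j + 1 := ⟨n - i, by omega⟩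
  rw [hj]
  simp only [gridCoord, if_pos (by omega : i ≤ n), if_pos (by omega : j ≤ n), side]
  have : (i : ℝ) + j = n := by exact_mod_cast (by omega : i + j = n)
  linarith

lemma shiftedCoord_of_le (hi : i ≤ n + 1) : shiftedCoord n i = gridCoord n i + D / 2 :=
  if_pos hi

lemma shiftedCoord_last : shiftedCoord n (n + 2) = side n - D / 2 :=
  if_neg (by omega)

lemma shiftedCoord_le_side_sub (hi : i ≤ n + 1) : shiftedCoord n i ≤ side n - C + D / 2 := by
  rw [shiftedCoord_of_le hi]; linarith [gridCoord_le_side_sub_C hi]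

lemma shiftedCoord_mem_Icc (i : ℕ) : shiftedCoord n i ∈ Set.Icc (D / 2) (side n - D / 2) := by
  have := C_le_side_sub_C (n := n)
  rcases le_or_gt i (n + 1) with hi | hi
  · rw [shiftedCoord_of_le hi]
    constructor <;> linarith [gridCoord_nonneg (n := n) i, gridCoord_le_side_sub_C hi,
      one_le_C_sub_D, D_nonneg]
  · rw [shiftedCoord, if_neg (by omega)]
    constructor <;> linarith [one_le_C_sub_D, D_nonneg]

variable (n) in
lemma shiftedCoord_eq_or_C_add_le (i : ℕ) :
    shiftedCoord n i = D / 2 ∨ C + D / 2 ≤ shiftedCoord n i := by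
  rcases eq_or_ne i 0 with rfl | hi
  · left; simp [shiftedCoord_of_le]
  · right
    unfold shiftedCoord
    split_ifs
    · linarith [C_le_gridCoord (n := n) hi]
    · linarith [C_le_side_sub_C (n := n), one_le_C_sub_D]

lemma shiftedCoord_eq_or_le_side_sub (hi : i ≤ n + 2) :
    shiftedCoord n i = side n - D / 2 ∨ shiftedCoord n i ≤ side n - C + D / 2 := by
  rcases eq_or_lt_of_le hi with rfl | hi
  · exact Or.inl shiftedCoord_last
  · exact Or.inr (shiftedCoord_le_side_sub (by omega))

lemma shiftedCoord_add_one_le (hij : i < j) (hj : j ≤ n + 2) :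
    shiftedCoord n i + 1 ≤ shiftedCoord n j := by
  rcases eq_or_lt_of_le hj with rfl | hj
  · linarith [shiftedCoord_le_side_sub (n := n) (by omega : i ≤ n + 1),
      shiftedCoord_last (n := n), one_le_C_sub_D]
  · rw [shiftedCoord_of_le (by omega), shiftedCoord_of_le (by omega)]
    linarith [gridCoord_add_one_le hij (by omega : j ≤ n + 2)]

lemma one_le_abs_shiftedCoord_sub (hij : i ≠ j) (hi : i ≤ n + 2) (hj : j ≤ n + 2) :
    1 ≤ |shiftedCoord n i - shiftedCoord n j| := by
  rcases lt_or_gt_of_ne hij with h | h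
  · rw [abs_sub_comm, le_abs]; left; linarith [shiftedCoord_add_one_le h hj]
  · rw [le_abs]; left; linarith [shiftedCoord_add_one_le h hi]

lemma half_D_le_abs_gridCoord_sub_shiftedCoord (hi : i ≤ n + 2) (hj : j ≤ n + 2) :
    D / 2 ≤ |gridCoord n i - shiftedCoord n j| := by
  have := D_le_one
  have := D_nonneg
  rcases le_or_gt j (n + 1) with hj' | hj'
  · rw [shiftedCoord_of_le hj']
    rcases eq_or_ne i j with rfl | hij
    · rw [sub_add_cancel_left, abs_neg, abs_of_nonneg (by linarith)]
    · have := one_le_abs_gridCoord_sub hij hi hj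
      rw [le_abs] at this ⊢
      rcases this with h | h <;> [left; right] <;> linarith
  · obtain rfl : j = n + 2 := by omega
    rw [shiftedCoord_last]
    rcases eq_or_lt_of_le hi with rfl | hi'
    · rw [gridCoord_last, sub_sub_cancel, abs_of_nonneg (by linarith)]
    · rw [abs_sub_comm, le_abs]; left
      linarith [gridCoord_le_side_sub_C (n := n) (by omega : i ≤ n + 1), one_le_C_sub_D]

def sqDist (p r : ℝ × ℝ) : ℝ := (p.1 - r.1) ^ 2 + (p.2 - r.2) ^ 2

lemma sqDist_comm (p r : ℝ × ℝ) : sqDist p r = sqDist r p := by unfold sqDist; ring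

lemma one_le_sqDist {p r : ℝ × ℝ} {a b : ℝ} (ha : 0 ≤ a) (hb : 0 ≤ b) (hab : a ^ 2 + b ^ 2 = 1)
    (h₁ : a ≤ |p.1 - r.1|) (h₂ : b ≤ |p.2 - r.2|) : 1 ≤ sqDist p r := by
  unfold sqDist
  rw [← sq_abs (p.1 - r.1), ← sq_abs (p.2 - r.2), ← hab]
  gcongr

lemma one_le_sqDist_of_fst {p r : ℝ × ℝ} (h : 1 ≤ |p.1 - r.1|) : 1 ≤ sqDist p r :=
  one_le_sqDist zero_le_one le_rfl (by norm_num) h (abs_nonneg _)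

lemma one_le_sqDist_of_snd {p r : ℝ × ℝ} (h : 1 ≤ |p.2 - r.2|) : 1 ≤ sqDist p r :=
  one_le_sqDist le_rfl zero_le_one (by norm_num) (abs_nonneg _) h

variable (n) in
noncomputable def squareSymm : Bool × Bool → ℝ × ℝ → ℝ × ℝ
  | (false, false), p => p
  | (true, false), p => p.swap
  | (false, true), p => (side n - p.1, side n - p.2)
  | (true, true), p => (side n - p.2, side n - p.1)

lemma sqDist_squareSymm (g : Bool × Bool) (p r : ℝ × ℝ) :
    sqDist (squareSymm n g p) (squareSymm n g r) = sqDist p r := by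
  rcases g with ⟨_ | _, _ | _⟩ <;>
    simp only [squareSymm, sqDist, Prod.fst_swap, Prod.snd_swap] <;> ring

lemma squareSymm_squareSymm (g h : Bool × Bool) (p : ℝ × ℝ) :
    squareSymm n g (squareSymm n h p) = squareSymm n (g.1 ^^ h.1, g.2 ^^ h.2) p := by
  rcases g with ⟨_ | _, _ | _⟩ <;> rcases h with ⟨_ | _, _ | _⟩ <;> simp [squareSymm, Prod.swap]

lemma sqDist_squareSymm_right (g : Bool × Bool) (p r : ℝ × ℝ) :
    sqDist p (squareSymm n g r) = sqDist (squareSymm n g p) r := by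
  rw [← sqDist_squareSymm g, squareSymm_squareSymm]
  simp [squareSymm]

lemma squareSymm_mem (g : Bool × Bool) {p : ℝ × ℝ}
    (hp : p ∈ Set.Icc 0 (side n) ×ˢ Set.Icc 0 (side n)) :
    squareSymm n g p ∈ Set.Icc 0 (side n) ×ˢ Set.Icc 0 (side n) := by
  simp only [Set.mem_prod, Set.mem_Icc] at hp ⊢
  rcases g with ⟨_ | _, _ | _⟩ <;> simp only [squareSymm, Prod.fst_swap, Prod.snd_swap] <;>
    refine ⟨⟨?_, ?_⟩, ?_, ?_⟩ <;> linarith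

variable (n) in
noncomputable def gridPoint (i j : ℕ) : ℝ × ℝ := (gridCoord n i, gridCoord n j)

variable (n) in
noncomputable def rowPoint (i : ℕ) : ℝ × ℝ := (shiftedCoord n i, C / 2)

noncomputable def cornerPoint : ℝ × ℝ := ((C + D) / 2, (C + D) / 2)

lemma squareSymm_gridPoint (g : Bool × Bool) (hi : i ≤ n + 2) (hj : j ≤ n + 2) :
    ∃ k ≤ n + 2, ∃ l ≤ n + 2, squareSymm n g (gridPoint n i j) = gridPoint n k l := by
  rcases g with ⟨_ | _, _ | _⟩
  · exact ⟨i, hi, j, hj, rfl⟩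
  · exact ⟨n + 2 - i, by omega, n + 2 - j, by omega,
      by simp [squareSymm, gridPoint, side_sub_gridCoord hi, side_sub_gridCoord hj]⟩
  · exact ⟨j, hj, i, hi, rfl⟩
  · exact ⟨n + 2 - j, by omega, n + 2 - i, by omega,
      by simp [squareSymm, gridPoint, side_sub_gridCoord hi, side_sub_gridCoord hj]⟩

lemma squareSymm_cornerPoint (g : Bool × Bool) :
    squareSymm n g cornerPoint = squareSymm n (false, g.2) cornerPoint := by
  rcases g with ⟨_ | _, _ | _⟩ <;> rfl

lemma one_le_sqDist_gridPoint (hne : (i, j) ≠ (k, l)) (hi : i ≤ n + 2) (hj : j ≤ n + 2)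
    (hk : k ≤ n + 2) (hl : l ≤ n + 2) : 1 ≤ sqDist (gridPoint n i j) (gridPoint n k l) := by
  rcases eq_or_ne i k with rfl | hik
  · exact one_le_sqDist_of_snd (one_le_abs_gridCoord_sub (by simpa using hne) hj hl)
  · exact one_le_sqDist_of_fst (one_le_abs_gridCoord_sub hik hi hk)

lemma one_le_sqDist_gridPoint_rowPoint (hi : i ≤ n + 2) (hk : k ≤ n + 2) (j : ℕ) :
    1 ≤ sqDist (gridPoint n i j) (rowPoint n k) := by
  have := D_nonneg
  have := one_le_C_sub_D
  refine one_le_sqDist (a := D / 2) (b := C / 2) (by linarith) (by linarith)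
    (by linarith [half_C_sq_add_half_D_sq]) (half_D_le_abs_gridCoord_sub_shiftedCoord hi hk) ?_
  simp only [gridPoint, rowPoint]
  rw [le_abs']
  rcases gridCoord_eq_zero_or_C_le n j with h | h <;> [left; right] <;> linarith

lemma one_le_sqDist_gridPoint_cornerPoint (i j : ℕ) :
    1 ≤ sqDist (gridPoint n i j) cornerPoint := by
  have := D_nonneg
  have := one_le_C_sub_D
  have key (i : ℕ) : (C - D) / 2 ≤ |gridCoord n i - (C + D) / 2| := by
    rw [le_abs']
    rcases gridCoord_eq_zero_or_C_le n i with h | h <;> [left; right] <;> linarith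
  exact one_le_sqDist (by linarith) (by linarith) half_C_sub_D_sq_add_self (key i) (key j)

lemma one_le_sqDist_rowPoint_squareSymm (g : Bool × Bool) (hg : g = (false, false) → i ≠ j)
    (hi : i ≤ n + 2) (hj : j ≤ n + 2) :
    1 ≤ sqDist (rowPoint n i) (squareSymm n g (rowPoint n j)) := by
  have := D_nonneg
  have := one_le_C_sub_D
  have := C_le_side_sub_C (n := n)
  have low (i : ℕ) : (C - D) / 2 ≤ |shiftedCoord n i - C / 2| := by
    rw [le_abs']
    rcases shiftedCoord_eq_or_C_add_le n i with h | h <;> [left; right] <;> linarith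
  have high (i : ℕ) (hi : i ≤ n + 2) :
      (C - D) / 2 ≤ |shiftedCoord n i - (side n - C / 2)| := by
    rw [le_abs']
    rcases shiftedCoord_eq_or_le_side_sub hi with h | h <;> [right; left] <;> linarith
  rcases g with ⟨_ | _, _ | _⟩ <;> simp only [squareSymm, rowPoint, Prod.swap]
  · exact one_le_sqDist_of_fst (one_le_abs_shiftedCoord_sub (hg rfl) hi hj)
  · refine one_le_sqDist_of_snd ?_
    rw [le_abs']; left; linarith
  · exact one_le_sqDist (by linarith) (by linarith) half_C_sub_D_sq_add_self (low i)
      (by rw [abs_sub_comm]; exact low j)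
  · refine one_le_sqDist (by linarith) (by linarith) half_C_sub_D_sq_add_self (high i hi) ?_
    rw [show C / 2 - (side n - shiftedCoord n j) = shiftedCoord n j - (side n - C / 2) by ring]
    exact high j hj

lemma one_le_sqDist_rowPoint_cornerPoint (i : ℕ) (e : Bool) :
    1 ≤ sqDist (rowPoint n i) (squareSymm n (false, e) cornerPoint) := by
  have := D_nonneg
  have := one_le_C_sub_D
  have := C_le_side_sub_C (n := n)
  rcases e with _ | _ <;> simp only [squareSymm, rowPoint, cornerPoint]
  · refine one_le_sqDist (a := C / 2) (b := D / 2) (by linarith) (by linarith)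
      half_C_sq_add_half_D_sq ?_ ?_ <;> rw [le_abs']
    · rcases shiftedCoord_eq_or_C_add_le n i with h | h <;> [left; right] <;> linarith
    · left; linarith
  · refine one_le_sqDist_of_snd ?_
    rw [le_abs']; left; linarith

lemma one_le_sqDist_cornerPoint :
    1 ≤ sqDist cornerPoint (squareSymm n (false, true) cornerPoint) := by
  have := one_le_C_sub_D
  have := C_le_side_sub_C (n := n)
  refine one_le_sqDist_of_fst ?_
  simp only [squareSymm, cornerPoint]
  rw [le_abs']; left; linarith

variable (n) in
/-- The four shifted rows are the images of the bottom one under `squareSymm`. -/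
abbrev Index := (Fin (n + 3) × Fin (n + 3)) ⊕ ((Bool × Bool) × Fin (n + 3)) ⊕ Bool

variable (n) in
noncomputable def point : Index n → ℝ × ℝ
  | .inl (i, j) => gridPoint n i j
  | .inr (.inl (g, i)) => squareSymm n g (rowPoint n i)
  | .inr (.inr e) => squareSymm n (false, e) cornerPoint

lemma card_index : Fintype.card (Index n) = (n + 5) ^ 2 - 2 := by
  simp only [Fintype.card_sum, Fintype.card_prod, Fintype.card_fin, Fintype.card_bool]
  ring_nf; omega

lemma point_mem (x : Index n) : point n x ∈ Set.Icc 0 (side n) ×ˢ Set.Icc 0 (side n) := by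
  have := D_nonneg
  have := one_le_C_sub_D
  have := C_le_side_sub_C (n := n)
  rcases x with ⟨i, j⟩ | ⟨g, i⟩ | e <;> simp only [point, rowPoint, cornerPoint]
  · exact ⟨⟨gridCoord_nonneg i, gridCoord_le_side i⟩, gridCoord_nonneg j, gridCoord_le_side j⟩
  · obtain ⟨h₁, h₂⟩ := shiftedCoord_mem_Icc (n := n) i
    exact squareSymm_mem g ⟨⟨by linarith, by linarith⟩, by linarith, by linarith⟩
  · exact squareSymm_mem _ ⟨⟨by linarith, by linarith⟩, by linarith, by linarith⟩

lemma one_le_sqDist_point {x y : Index n} (hxy : x ≠ y) :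
    1 ≤ sqDist (point n x) (point n y) := by
  have grid_row (i j : Fin (n + 3)) (g : Bool × Bool) (k : Fin (n + 3)) :
      1 ≤ sqDist (gridPoint n i j) (squareSymm n g (rowPoint n k)) := by
    obtain ⟨i', hi', j', -, h⟩ := squareSymm_gridPoint g (n := n) (i := i) (j := j) (by omega)
      (by omega)
    rw [sqDist_squareSymm_right, h]
    exact one_le_sqDist_gridPoint_rowPoint hi' (by omega) j'
  have grid_corner (i j : Fin (n + 3)) (e : Bool) :
      1 ≤ sqDist (gridPoint n i j) (squareSymm n (false, e) cornerPoint) := by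
    obtain ⟨i', -, j', -, h⟩ := squareSymm_gridPoint (false, e) (n := n) (i := i) (j := j)
      (by omega) (by omega)
    rw [sqDist_squareSymm_right, h]
    exact one_le_sqDist_gridPoint_cornerPoint i' j'
  have row_corner (g : Bool × Bool) (k : Fin (n + 3)) (e : Bool) :
      1 ≤ sqDist (squareSymm n g (rowPoint n k)) (squareSymm n (false, e) cornerPoint) := by
    rw [sqDist_comm, sqDist_squareSymm_right, squareSymm_squareSymm, squareSymm_cornerPoint,
      sqDist_comm]
    exact one_le_sqDist_rowPoint_cornerPoint k _
  rcases x with ⟨i, j⟩ | ⟨g, i⟩ | e <;> rcases y with ⟨k, l⟩ | ⟨h, k⟩ | e' <;> simp only [point]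
  · exact one_le_sqDist_gridPoint (by simpa [Fin.val_eq_val] using hxy) (by omega) (by omega)
      (by omega) (by omega)
  · exact grid_row i j h k
  · exact grid_corner i j e'
  · rw [sqDist_comm]; exact grid_row k l g i
  · rw [← sqDist_squareSymm_right, squareSymm_squareSymm]
    refine one_le_sqDist_rowPoint_squareSymm _ (fun hgh hik ↦ hxy ?_) (by omega) (by omega)
    simp only [Prod.mk.injEq, Bool.xor, bne_eq_false_iff_eq] at hgh
    simp [Prod.ext_iff, hgh, Fin.ext hik]
  · exact row_corner g i e'
  · rw [sqDist_comm]; exact grid_corner k l e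
  · rw [sqDist_comm]; exact row_corner h k e
  · rcases e with _ | _ <;> rcases e' with _ | _ <;> simp only [ne_eq, not_true_eq_false] at hxy
    · exact one_le_sqDist_cornerPoint
    · rw [sqDist_comm]; exact one_le_sqDist_cornerPoint

def toPlane (p : ℝ × ℝ) : EuclideanSpace ℝ (Fin 2) := !₂[p.1, p.2]

lemma dist_toPlane (p r : ℝ × ℝ) : dist (toPlane p) (toPlane r) = √(sqDist p r) := by
  simp [EuclideanSpace.dist_eq, toPlane, sqDist, Fin.sum_univ_two, Real.dist_eq]

theorem exists_packing (n : ℕ) :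
    ∃ f : Fin ((n + 5) ^ 2 - 2) → EuclideanSpace ℝ (Fin 2),
      (∀ i t, f i t ∈ Set.Icc (0 : ℝ) 1) ∧ ∀ i j, i ≠ j → 1 / side n ≤ dist (f i) (f j) := by
  let e := (Fintype.equivFinOfCardEq (card_index (n := n))).symm
  have hs : 0 < side n := side_pos
  refine ⟨fun i ↦ (side n)⁻¹ • toPlane (point n (e i)), fun i t ↦ ?_, fun i j hij ↦ ?_⟩
  · have scale {a : ℝ} (ha : a ∈ Set.Icc 0 (side n)) : (side n)⁻¹ * a ∈ Set.Icc (0 : ℝ) 1 :=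
      ⟨by have := ha.1; positivity, inv_mul_le_one_of_le₀ ha.2 hs.le⟩
    obtain ⟨h₁, h₂⟩ := point_mem (e i)
    fin_cases t
    · simpa [toPlane] using scale h₁
    · simpa [toPlane] using scale h₂
  · rw [dist_smul₀, dist_toPlane, Real.norm_eq_abs, abs_inv, abs_of_pos hs, one_div]
    exact le_mul_of_one_le_right (inv_nonneg.2 hs.le)
      (Real.one_le_sqrt.2 (one_le_sqDist_point (e.injective.ne hij)))

end SquarePacking

/-- For every integer `k ≥ 5` there exist `k² - 2` points in the closed unit square
whose pairwise distances are all at least `1 / (k - 5 + 2√(2 + √3))`. -/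
theorem stmt_2 (k : ℕ) (hk : 5 ≤ k) :
    ∃ f : Fin (k ^ 2 - 2) → EuclideanSpace ℝ (Fin 2),
      (∀ i t, f i t ∈ Set.Icc (0 : ℝ) 1) ∧
      ∀ i j, i ≠ j →
        1 / ((k : ℝ) - 5 + 2 * Real.sqrt (2 + Real.sqrt 3)) ≤ dist (f i) (f j) := by
  obtain ⟨n, rfl⟩ := Nat.exists_eq_add_of_le' hk
  have hside : ((n + 5 : ℕ) : ℝ) - 5 + 2 * √(2 + √3) = SquarePacking.side n := by
    rw [SquarePacking.side, SquarePacking.C]; push_cast; ring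
  rw [hside]
  exact SquarePacking.exists_packing n
end

section
/- For every integer k ≥ 1, (k² − k + √(2k)) / (k² + 1) ≥ √3/2 if and only if k ≥ 4. -/
/-!
For `k ≥ 4` the inequality `2 (k² - k + √(2k)) ≥ √3 (k² + 1)` follows from the crude bounds
`√3 ≤ 26/15` and `√(2k) ≥ √8 ≥ 14/5`: what remains is a quadratic in `k` that is positive and
increasing from `k = 4` on. The cases `k ≤ 3` are checked one by one against `√3 > 173/100`.
-/

open Real

/-- The paper's `cos α(k)`, extended to real arguments. -/
noncomputable def cosAlpha (x : ℝ) : ℝ :=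
  (x ^ 2 - x + √(2 * x)) / (x ^ 2 + 1)

theorem sqrt_three_div_two_le_cosAlpha {x : ℝ} (hx : 4 ≤ x) : √3 / 2 ≤ cosAlpha x := by
  have h3 : √3 < 26 / 15 := (sqrt_lt' (by norm_num)).2 (by norm_num)
  have h8 : 14 / 5 ≤ √(2 * x) := (le_sqrt (by norm_num) (by linarith)).2 (by nlinarith)
  rw [cosAlpha, div_le_div_iff₀ two_pos (by positivity)]
  nlinarith

theorem cosAlpha_natCast_lt_sqrt_three_div_two {k : ℕ} (hk : k < 4) :
    cosAlpha k < √3 / 2 := by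
  have h3 : 173 / 100 < √3 := (lt_sqrt (by norm_num)).2 (by norm_num)
  interval_cases k <;> simp only [cosAlpha] <;> norm_num
  · gcongr; norm_num
  · linarith
  · have h6 : √6 < 49 / 20 := (sqrt_lt' (by norm_num)).2 (by norm_num)
    linarith

theorem stmt_5_general (k : ℕ) :
    ((k : ℝ) ^ 2 - k + Real.sqrt (2 * k)) / ((k : ℝ) ^ 2 + 1) ≥ Real.sqrt 3 / 2 ↔
      4 ≤ k :=
  ⟨fun h => not_lt.1 fun hk => (cosAlpha_natCast_lt_sqrt_three_div_two hk).not_ge h,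
    fun hk => sqrt_three_div_two_le_cosAlpha (by exact_mod_cast hk)⟩

/-- For every integer `k ≥ 1`, `(k² - k + √(2k)) / (k² + 1) ≥ √3/2` iff `k ≥ 4`. -/
theorem stmt_5 (k : ℕ) (hk : 1 ≤ k) :
    ((k : ℝ) ^ 2 - k + Real.sqrt (2 * k)) / ((k : ℝ) ^ 2 + 1) ≥ Real.sqrt 3 / 2 ↔
      4 ≤ k :=
  stmt_5_general k
end

section
/- For every integer k ≥ 4 there exist k(k+1) points in the closed unit square [0,1]² whose pairwise distances are all at least 1/((k + 1/2)·cos β(k) + (√3/2)·sin β(k)), where β(k) ∈ (0, π/2) is the unique angle with tan β(k) = (2k + 1 − √3·(k − 1))/(k + 1 + √3). -/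
/-!
The triangular lattice of spacing `1 / D`, with rows of `⌊D + 1/2⌋` points (alternate rows
shifted by half a spacing) and `⌊2D/√3⌋ + 1` rows, fits in the unit square and has minimal
distance `1 / D`. For `D = (k + 1/2) cos β + (√3/2) sin β`, writing `tan β = B / A` turns `D`
into `(k² + 2√3 k + √3 + 2) / √(A² + B²)`, which is at least `(24k + 8)/25`; this linear bound
already makes the lattice hold `k (k + 1)` points.
-/

open Real Set Function

def IsUnitSquarePacking {ι : Type*} (m : ℝ) (f : ι → EuclideanSpace ℝ (Fin 2)) : Prop :=
  (∀ i t, f i t ∈ Icc (0 : ℝ) 1) ∧ Pairwise fun i j => m ≤ dist (f i) (f j)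

theorem IsUnitSquarePacking.comp {ι κ : Type*} {m : ℝ} {f : ι → EuclideanSpace ℝ (Fin 2)}
    (hf : IsUnitSquarePacking m f) {g : κ → ι} (hg : Injective g) :
    IsUnitSquarePacking m (f ∘ g) :=
  ⟨fun i => hf.1 (g i), hf.2.comp_of_injective hg⟩

/-- `(x² + 3y²) / 4` is the norm of the Eisenstein integer `(x + y √-3) / 2`. -/
theorem four_le_sq_add_three_mul_sq {x y : ℤ} (hxy : Even (x - y)) (hne : x ≠ 0 ∨ y ≠ 0) :
    4 ≤ x ^ 2 + 3 * y ^ 2 := by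
  obtain ⟨c, hc⟩ := hxy
  obtain rfl | rfl | rfl | hy | hy : y = 0 ∨ y = 1 ∨ y = -1 ∨ 2 ≤ y ∨ y ≤ -2 := by omega
  · obtain hx | hx : 2 ≤ x ∨ x ≤ -2 := by omega
    all_goals nlinarith
  · obtain hx | hx : 1 ≤ x ∨ x ≤ -1 := by omega
    all_goals nlinarith
  · obtain hx | hx : 1 ≤ x ∨ x ≤ -1 := by omega
    all_goals nlinarith
  all_goals nlinarith [sq_nonneg x]

noncomputable def triLatticePoint (m : ℝ) (a b : ℕ) : EuclideanSpace ℝ (Fin 2) :=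
  !₂[((2 * a + b % 2 : ℕ) : ℝ) * (m / 2), b * √3 * (m / 2)]

theorem le_dist_triLatticePoint {m : ℝ} (hm : 0 ≤ m) {a b a' b' : ℕ} (h : (a, b) ≠ (a', b')) :
    m ≤ dist (triLatticePoint m a b) (triLatticePoint m a' b') := by
  set x : ℤ := (2 * a + b % 2 : ℕ) - (2 * a' + b' % 2 : ℕ) with hx
  set y : ℤ := b - b' with hy
  have hxy : Even (x - y) := by rw [Int.even_iff]; omega
  have hne : x ≠ 0 ∨ y ≠ 0 := by
    simp only [ne_eq, Prod.mk.injEq] at h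
    omega
  have h4 : (4 : ℝ) ≤ x ^ 2 + 3 * y ^ 2 := by
    exact_mod_cast four_le_sq_add_three_mul_sq hxy hne
  have h3 : √3 ^ 2 = 3 := sq_sqrt (by norm_num)
  rw [EuclideanSpace.dist_eq, le_sqrt hm (by positivity), Fin.sum_univ_two]
  simp only [triLatticePoint, PiLp.toLp_apply, Matrix.cons_val_zero, Matrix.cons_val_one,
    Real.dist_eq, sq_abs]
  have hsq : (((2 * a + b % 2 : ℕ) : ℝ) * (m / 2) - ((2 * a' + b' % 2 : ℕ) : ℝ) * (m / 2)) ^ 2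
        + (b * √3 * (m / 2) - b' * √3 * (m / 2)) ^ 2 = (m / 2) ^ 2 * (x ^ 2 + 3 * y ^ 2) := by
    simp only [hx, hy, Int.cast_sub, Int.cast_natCast]
    linear_combination ((b : ℝ) - b') ^ 2 * (m / 2) ^ 2 * h3
  rw [hsq]
  nlinarith [sq_nonneg m]

theorem triLatticePoint_mem_Icc {m : ℝ} (hm : 0 ≤ m) {p R a b : ℕ} (ha : a < p) (hb : b < R)
    (hp : (2 * p - 1) * m ≤ 2) (hR : (R - 1) * √3 * m ≤ 2) (t : Fin 2) :
    triLatticePoint m a b t ∈ Icc (0 : ℝ) 1 := by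
  have ha' : ((2 * a + b % 2 : ℕ) : ℝ) ≤ 2 * p - 1 := by
    have : ((2 * a + b % 2 + 1 : ℕ) : ℝ) ≤ 2 * p := by exact_mod_cast (by omega : _ ≤ 2 * p)
    push_cast at this ⊢
    linarith
  have hb' : (b : ℝ) ≤ R - 1 := by
    have : ((b + 1 : ℕ) : ℝ) ≤ R := by exact_mod_cast hb
    push_cast at this
    linarith
  fin_cases t
  · simp only [triLatticePoint, PiLp.toLp_apply, Fin.zero_eta, Matrix.cons_val_zero]
    exact ⟨by positivity, by nlinarith⟩
  · simp only [triLatticePoint, PiLp.toLp_apply, Fin.mk_one, Matrix.cons_val_one,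
      Matrix.cons_val_zero]
    refine ⟨by positivity, ?_⟩
    nlinarith [mul_nonneg (sub_nonneg.2 hb') (mul_nonneg (sqrt_nonneg 3) hm)]

theorem isUnitSquarePacking_triLatticePoint {m : ℝ} (hm : 0 ≤ m) {p R : ℕ}
    (hp : (2 * p - 1) * m ≤ 2) (hR : (R - 1) * √3 * m ≤ 2) :
    IsUnitSquarePacking m fun x : Fin p × Fin R => triLatticePoint m x.1 x.2 := by
  refine ⟨fun x => triLatticePoint_mem_Icc hm x.1.2 x.2.2 hp hR, fun x y hxy => ?_⟩
  refine le_dist_triLatticePoint hm fun h => hxy ?_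
  simp only [Prod.mk.injEq] at h
  exact Prod.ext (Fin.ext h.1) (Fin.ext h.2)

theorem exists_isUnitSquarePacking_fin {D : ℝ} (hD : 0 < D) {n : ℕ}
    (hn : n ≤ ⌊D + 1 / 2⌋₊ * (⌊2 * D / √3⌋₊ + 1)) :
    ∃ f : Fin n → EuclideanSpace ℝ (Fin 2), IsUnitSquarePacking (1 / D) f := by
  have hp : (2 * (⌊D + 1 / 2⌋₊ : ℝ) - 1) * (1 / D) ≤ 2 := by
    have := Nat.floor_le (by positivity : 0 ≤ D + 1 / 2)
    rw [← div_eq_mul_one_div, div_le_iff₀ hD]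
    linarith
  have hR : (((⌊2 * D / √3⌋₊ + 1 : ℕ) : ℝ) - 1) * √3 * (1 / D) ≤ 2 := by
    have := Nat.floor_le (by positivity : 0 ≤ 2 * D / √3)
    rw [← div_eq_mul_one_div, div_le_iff₀ hD]
    push_cast
    rw [add_sub_cancel_right, ← le_div_iff₀ (by positivity)]
    linarith
  exact ⟨_, (isUnitSquarePacking_triLatticePoint (by positivity) hp hR).comp
    (finProdFinEquiv.symm.injective.comp (Fin.castLE_injective hn))⟩

theorem sqrt_three_mem_Icc : √3 ∈ Icc (1.732 : ℝ) 1.7321 := by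
  have h3 : √3 ^ 2 = 3 := sq_sqrt (by norm_num)
  constructor <;> nlinarith [sqrt_nonneg 3]

theorem mul_succ_le_floor_mul_floor {k : ℕ} {D : ℝ} (hD : (24 * k + 8) / 25 ≤ D) :
    k * (k + 1) ≤ ⌊D + 1 / 2⌋₊ * (⌊2 * D / √3⌋₊ + 1) := by
  obtain ⟨hlo, hhi⟩ := sqrt_three_mem_Icc
  have hk0 : (0 : ℝ) ≤ k := k.cast_nonneg
  rcases le_or_gt k 20 with hk | hk
  · have hk' : (k : ℝ) ≤ 20 := by exact_mod_cast hk
    have hp : k ≤ ⌊D + 1 / 2⌋₊ := Nat.le_floor (by linarith)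
    have hR : k ≤ ⌊2 * D / √3⌋₊ :=
      Nat.le_floor (by rw [le_div_iff₀ (by positivity)]; nlinarith)
    exact Nat.mul_le_mul hp (by omega)
  · have hk' : (21 : ℝ) ≤ k := by exact_mod_cast hk
    have hp : D - 1 / 2 < ⌊D + 1 / 2⌋₊ := by linarith [Nat.lt_floor_add_one (D + 1 / 2)]
    have hR : 2 * D / √3 < ⌊2 * D / √3⌋₊ + 1 := Nat.lt_floor_add_one _
    have hreal : (k : ℝ) * (k + 1) ≤ (D - 1 / 2) * (2 * D / √3) := by
      rw [← mul_div_assoc, le_div_iff₀ (by positivity)]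
      nlinarith [mul_nonneg (sub_nonneg.2 hD)
          (by linarith : 0 ≤ 2 * D + 2 * ((24 * k + 8) / 25) - 1),
        mul_le_mul_of_nonneg_left hhi (by positivity : (0 : ℝ) ≤ k * (k + 1))]
    have : (D - 1 / 2) * (2 * D / √3) ≤ ⌊D + 1 / 2⌋₊ * (⌊2 * D / √3⌋₊ + 1) :=
      mul_le_mul hp.le hR.le (div_nonneg (by linarith) (sqrt_nonneg 3)) (by positivity)
    exact_mod_cast hreal.trans this

theorem mul_cos_add_mul_sin_of_tan_eq {a b A B β : ℝ} (hA : 0 < A)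
    (hβ : β ∈ Ioo (-(π / 2)) (π / 2)) (h : tan β = B / A) :
    a * cos β + b * sin β = (a * A + b * B) / √(A ^ 2 + B ^ 2) := by
  have hsqrt : √(1 + (B / A) ^ 2) = √(A ^ 2 + B ^ 2) / A := by
    rw [div_pow, one_add_div (by positivity), sqrt_div' _ (sq_nonneg A), sqrt_sq hA.le]
  have : 0 < √(A ^ 2 + B ^ 2) := by positivity
  rw [← arctan_tan hβ.1 hβ.2, h, cos_arctan, sin_arctan, hsqrt]
  field_simp

theorem div_le_mul_cos_add_mul_sin {K β : ℝ} (hK : 0 ≤ K) (hβ : β ∈ Ioo 0 (π / 2))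
    (htan : tan β = (2 * K + 1 - √3 * (K - 1)) / (K + 1 + √3)) :
    (24 * K + 8) / 25 ≤ (K + 1 / 2) * cos β + √3 / 2 * sin β := by
  obtain ⟨hlo, hhi⟩ := sqrt_three_mem_Icc
  have h3 : √3 ^ 2 = 3 := sq_sqrt (by norm_num)
  set r := √3
  have hA : 0 < K + 1 + r := by linarith
  have hnum : (K + 1 / 2) * (K + 1 + r) + r / 2 * (2 * K + 1 - r * (K - 1))
      = K ^ 2 + 2 * r * K + r + 2 := by linear_combination (1 - K) / 2 * h3
  have hden : (K + 1 + r) ^ 2 + (2 * K + 1 - r * (K - 1)) ^ 2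
      = (8 - 4 * r) * K ^ 2 + 4 * r * K + 8 + 4 * r := by linear_combination (1 + (K - 1) ^ 2) * h3
  have hM : 0 < (8 - 4 * r) * K ^ 2 + 4 * r * K + 8 + 4 * r := by nlinarith
  rw [mul_cos_add_mul_sin_of_tan_eq hA ⟨by linarith [hβ.1, pi_pos], hβ.2⟩ htan, hnum, hden,
    le_div_iff₀ (sqrt_pos.2 hM)]
  -- the quartic `(K² + 2rK + r + 2)² - ((24K + 8)/25)² (A² + B²)` is `K²` times a positive
  -- quadratic plus terms with positive coefficients
  have hquad : 0 ≤ (2304 * r - 3983) * K ^ 2 + (1732 * r - 3072) * K + (4880 - 2334 * r) := by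
    nlinarith [sq_nonneg (K - 5), mul_nonneg (sub_nonneg.2 hlo) (sq_nonneg K),
      mul_nonneg (sub_nonneg.2 hlo) hK]
  have hpoly : ((24 * K + 8) / 25) ^ 2 * ((8 - 4 * r) * K ^ 2 + 4 * r * K + 8 + 4 * r)
      ≤ (K ^ 2 + 2 * r * K + r + 2) ^ 2 := by
    nlinarith [mul_nonneg (sq_nonneg K) hquad, mul_nonneg hK (sqrt_nonneg 3)]
  have := sqrt_le_sqrt hpoly
  rwa [sqrt_mul' _ hM.le, sqrt_sq (by positivity), sqrt_sq (by positivity)] at this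

theorem stmt_8_general (k : ℕ) (β : ℝ) (hβ : β ∈ Set.Ioo 0 (Real.pi / 2))
    (htan : Real.tan β =
      (2 * (k : ℝ) + 1 - Real.sqrt 3 * ((k : ℝ) - 1)) / ((k : ℝ) + 1 + Real.sqrt 3)) :
    ∃ f : Fin (k * (k + 1)) → EuclideanSpace ℝ (Fin 2),
      (∀ i t, f i t ∈ Set.Icc (0 : ℝ) 1) ∧
      ∀ i j, i ≠ j →
        1 / (((k : ℝ) + 1 / 2) * Real.cos β + Real.sqrt 3 / 2 * Real.sin β) ≤
          dist (f i) (f j) := by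
  have hD := div_le_mul_cos_add_mul_sin k.cast_nonneg hβ htan
  obtain ⟨f, hbox, hsep⟩ := exists_isUnitSquarePacking_fin
    ((by positivity : (0 : ℝ) < (24 * k + 8) / 25).trans_le hD) (mul_succ_le_floor_mul_floor hD)
  exact ⟨f, hbox, fun i j hij => hsep hij⟩

/-- For every integer `k ≥ 4` there exist `k(k+1)` points in the closed unit square
whose pairwise distances are all at least
`1 / ((k + 1/2) cos β(k) + (√3/2) sin β(k))`, where `β(k) ∈ (0, π/2)` is the unique
angle with `tan β(k) = (2k + 1 - √3 (k - 1)) / (k + 1 + √3)`. -/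
theorem stmt_8 (k : ℕ) (hk : 4 ≤ k) (β : ℝ) (hβ : β ∈ Set.Ioo 0 (Real.pi / 2))
    (htan : Real.tan β =
      (2 * (k : ℝ) + 1 - Real.sqrt 3 * ((k : ℝ) - 1)) / ((k : ℝ) + 1 + Real.sqrt 3)) :
    ∃ f : Fin (k * (k + 1)) → EuclideanSpace ℝ (Fin 2),
      (∀ i t, f i t ∈ Set.Icc (0 : ℝ) 1) ∧
      ∀ i j, i ≠ j →
        1 / (((k : ℝ) + 1 / 2) * Real.cos β + Real.sqrt 3 / 2 * Real.sin β) ≤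
          dist (f i) (f j) :=
  stmt_8_general k β hβ htan
end

section
/- For every integer k with 4 ≤ k ≤ 7, (k + 1/2)·cos β(k) + (√3/2)·sin β(k) > k·(k² − k + √(2k))/(k² + 1), where β(k) ∈ (0, π/2) is the unique angle with tan β(k) = (2k + 1 − √3·(k − 1))/(k + 1 + √3). Equivalently, the alternative-pattern diameter m̄(k) is strictly smaller than the main-pattern diameter m(k) for n = 20, 30, 42, and 56 disks. -/
/-!
Since `√(2k) ≤ k + 1`, the right-hand side is at most `k`. With `t = tan β` the left-hand side
is `(k + 1/2 + (√3/2) t) cos β` and `cos β ^ 2 = 1 / (1 + t ^ 2)`, so it exceeds `k` as soon as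
`k ^ 2 (1 + t ^ 2) < (k + 1/2 + (√3/2) t) ^ 2`. Clearing the denominator of `t` and reducing with
`√3 ^ 2 = 3` turns this into `0 < 7 + 12k + 8k² - 7k⁴ + √3 (4 + 8k - 2k² + 4k⁴)`, which holds for
`0 ≤ k ≤ 7` because `√3 > 1.73`.
-/

open Real

lemma lt_mul_cos_add_mul_sin {a b r β : ℝ} (hcos : 0 < cos β)
    (hab : 0 ≤ a + b * tan β) (h : r ^ 2 * (1 + tan β ^ 2) < (a + b * tan β) ^ 2) :
    r < a * cos β + b * sin β := by
  have hsin : sin β = tan β * cos β := by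
    rw [tan_eq_sin_div_cos, div_mul_cancel₀ _ hcos.ne']
  have hcos_sq : cos β ^ 2 * (1 + tan β ^ 2) = 1 := by
    rw [← inv_one_add_tan_sq hcos.ne', inv_mul_cancel₀ (by positivity)]
  have hsq : r ^ 2 < (a * cos β + b * sin β) ^ 2 := by
    rw [hsin]
    nlinarith [pow_pos hcos 2]
  exact lt_of_pow_lt_pow_left₀ 2 (by rw [hsin, ← mul_assoc, ← add_mul]; positivity) hsq

lemma mul_sub_add_sqrt_div_le_self {k : ℝ} (hk : 0 ≤ k) :
    k * (k ^ 2 - k + √(2 * k)) / (k ^ 2 + 1) ≤ k := by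
  have hsqrt : √(2 * k) ≤ k + 1 := sqrt_le_iff.mpr ⟨by linarith, by nlinarith⟩
  rw [div_le_iff₀ (by positivity)]
  nlinarith

lemma sq_mul_one_add_sq_lt_sq {k t : ℝ} (hk : 0 ≤ k) (hk7 : k ≤ 7)
    (ht : t = (2 * k + 1 - √3 * (k - 1)) / (k + 1 + √3)) :
    k ^ 2 * (1 + t ^ 2) < (k + 1 / 2 + √3 / 2 * t) ^ 2 := by
  set d := k + 1 + √3
  set u := 2 * k + 1 - √3 * (k - 1)
  have hs : √3 ^ 2 = 3 := sq_sqrt (by norm_num)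
  have hs_gt : (1.73 : ℝ) < √3 := by nlinarith [sqrt_nonneg 3]
  have hd : 0 < d := by positivity
  have hk4 : k ^ 4 ≤ 49 * k ^ 2 := by
    nlinarith [mul_le_mul_of_nonneg_left (show k ^ 2 ≤ 49 by nlinarith) (sq_nonneg k)]
  have hP : 0 ≤ 4 + 8 * k - 2 * k ^ 2 + 4 * k ^ 4 := by nlinarith [sq_nonneg (k ^ 2 - 1)]
  -- The multiplier of `hs` is the quotient of the left side minus the right side by `√3 ^ 2 - 3`,
  -- viewed as polynomials in `√3`.
  have hcleared : ((2 * k + 1) * d + √3 * u) ^ 2 - 4 * k ^ 2 * (d ^ 2 + u ^ 2) =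
      4 * (7 + 12 * k + 8 * k ^ 2 - 7 * k ^ 4 + √3 * (4 + 8 * k - 2 * k ^ 2 + 4 * k ^ 4)) := by
    linear_combination 4 * (9 / 4 + √3 + √3 ^ 2 / 4 + k * (7 / 2 + √3 - √3 ^ 2 / 2)
      + k ^ 2 * (9 / 4 - 2 * √3 + √3 ^ 2 / 4) + k ^ 3 - k ^ 4) * hs
  have hkey : 4 * k ^ 2 * (d ^ 2 + u ^ 2) < ((2 * k + 1) * d + √3 * u) ^ 2 := by
    nlinarith [mul_le_mul_of_nonneg_right hs_gt.le hP]
  calc k ^ 2 * (1 + t ^ 2) = 4 * k ^ 2 * (d ^ 2 + u ^ 2) / (2 * d) ^ 2 := by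
        rw [ht]; field_simp; ring
    _ < ((2 * k + 1) * d + √3 * u) ^ 2 / (2 * d) ^ 2 := by gcongr
    _ = (k + 1 / 2 + √3 / 2 * t) ^ 2 := by rw [ht]; field_simp

theorem stmt_10_general (k : ℕ) (hk' : k ≤ 7) (β : ℝ)
    (hβ : β ∈ Set.Ioo 0 (Real.pi / 2))
    (htan : Real.tan β =
      (2 * (k : ℝ) + 1 - Real.sqrt 3 * ((k : ℝ) - 1)) / ((k : ℝ) + 1 + Real.sqrt 3)) :
    ((k : ℝ) + 1 / 2) * Real.cos β + Real.sqrt 3 / 2 * Real.sin β >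
      (k : ℝ) * ((k : ℝ) ^ 2 - k + Real.sqrt (2 * k)) / ((k : ℝ) ^ 2 + 1) := by
  have hk0 : (0 : ℝ) ≤ k := k.cast_nonneg
  have hk7 : (k : ℝ) ≤ 7 := by exact_mod_cast hk'
  have hcos : 0 < cos β := cos_pos_of_mem_Ioo ⟨by linarith [hβ.1, pi_pos], hβ.2⟩
  have htan_pos : 0 < tan β := tan_pos_of_pos_of_lt_pi_div_two hβ.1 hβ.2
  refine lt_of_le_of_lt (mul_sub_add_sqrt_div_le_self hk0) ?_
  exact lt_mul_cos_add_mul_sin hcos (by positivity) (sq_mul_one_add_sq_lt_sq hk0 hk7 htan)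

/-- For every integer `k` with `4 ≤ k ≤ 7`,
`(k + 1/2) cos β(k) + (√3/2) sin β(k) > k (k² - k + √(2k)) / (k² + 1)`, where
`β(k) ∈ (0, π/2)` is the unique angle with
`tan β(k) = (2k + 1 - √3 (k - 1)) / (k + 1 + √3)`. -/
theorem stmt_10 (k : ℕ) (hk : 4 ≤ k) (hk' : k ≤ 7) (β : ℝ)
    (hβ : β ∈ Set.Ioo 0 (Real.pi / 2))
    (htan : Real.tan β =
      (2 * (k : ℝ) + 1 - Real.sqrt 3 * ((k : ℝ) - 1)) / ((k : ℝ) + 1 + Real.sqrt 3)) :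
    ((k : ℝ) + 1 / 2) * Real.cos β + Real.sqrt 3 / 2 * Real.sin β >
      (k : ℝ) * ((k : ℝ) ^ 2 - k + Real.sqrt (2 * k)) / ((k : ℝ) ^ 2 + 1) :=
  stmt_10_general k hk' β hβ htan
end

section
/- For every integer k with 2 ≤ k ≤ 7 there exist k² + ⌊k/2⌋ points in the closed unit square [0,1]² whose pairwise distances are all at least √(5k² − 8k + 4)/(2k(k − 1)). -/
/-!
Put column `j = 0, …, k` at abscissa `j / k` and, in it, disks at the heights `s / (2(k - 1))`
with `0 ≤ s ≤ 2k - 2` and `s ≡ j [MOD 2]`, so that column `j` holds `k - j % 2` disks. These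
points lie on the checkerboard sublattice `{(a p, b q) : p ≡ q [MOD 2]}` with `a = 1 / k` and
`b = 1 / (2(k - 1))`, whose minimal distance is the diagonal one, `√(a² + b²) = m(k)`, as long as
the horizontal and vertical steps `2a` and `2b` are not shorter; this is `b² ≤ 3a²` and
`a² ≤ 3b²`, and the latter reads `k² - 8k + 4 ≤ 0`, i.e. `k ≤ 7`.
-/

open Finset

lemma four_le_sq_of_emod_two_eq_zero {q : ℤ} (hq : q % 2 = 0) (hq0 : q ≠ 0) : 4 ≤ q ^ 2 := by
  obtain ⟨t, rfl⟩ : ∃ t, q = 2 * t := ⟨q / 2, by omega⟩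
  have : 1 ≤ t ^ 2 := (one_le_sq_iff_one_le_abs t).mpr (Int.one_le_abs (by omega))
  linarith

lemma sq_add_sq_le_of_emod_two_eq {a b : ℝ} (hba : b ^ 2 ≤ 3 * a ^ 2) (hab : a ^ 2 ≤ 3 * b ^ 2)
    {p q : ℤ} (hpq : p % 2 = q % 2) (hne : p ≠ 0 ∨ q ≠ 0) :
    a ^ 2 + b ^ 2 ≤ (a * p) ^ 2 + (b * q) ^ 2 := by
  rw [mul_pow, mul_pow]
  rcases eq_or_ne p 0 with rfl | hp
  · have : (4 : ℝ) ≤ (q : ℝ) ^ 2 := by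
      exact_mod_cast four_le_sq_of_emod_two_eq_zero (by omega) (by tauto)
    nlinarith [sq_nonneg a, sq_nonneg b]
  rcases eq_or_ne q 0 with rfl | hq
  · have : (4 : ℝ) ≤ (p : ℝ) ^ 2 := by
      exact_mod_cast four_le_sq_of_emod_two_eq_zero (by omega) hp
    nlinarith [sq_nonneg a, sq_nonneg b]
  have hp1 : (1 : ℝ) ≤ (p : ℝ) ^ 2 := by
    exact_mod_cast (one_le_sq_iff_one_le_abs p).mpr (Int.one_le_abs hp)
  have hq1 : (1 : ℝ) ≤ (q : ℝ) ^ 2 := by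
    exact_mod_cast (one_le_sq_iff_one_le_abs q).mpr (Int.one_le_abs hq)
  nlinarith [sq_nonneg a, sq_nonneg b]

lemma dist_toLp_fin_two (x y : Fin 2 → ℝ) :
    dist (WithLp.toLp 2 x) (WithLp.toLp 2 y) = √((x 0 - y 0) ^ 2 + (x 1 - y 1) ^ 2) := by
  simp [EuclideanSpace.dist_eq, Fin.sum_univ_two, Real.dist_eq, sq_abs]

lemma sum_range_sub_mod_two {k : ℕ} (hk : 1 ≤ k) (N : ℕ) :
    ∑ j ∈ range N, (k - j % 2) = N * k - N / 2 := by
  induction N with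
  | zero => simp
  | succ N ih =>
    rw [sum_range_succ, ih, add_mul, one_mul]
    have : N / 2 ≤ N * k := (Nat.div_le_self N 2).trans (Nat.le_mul_of_pos_right N hk)
    omega

noncomputable def checkerboardPoint (a b : ℝ) (p q : ℤ) : EuclideanSpace ℝ (Fin 2) :=
  !₂[a * p, b * q]

lemma sqrt_sq_add_sq_le_dist_checkerboardPoint {a b : ℝ} (hba : b ^ 2 ≤ 3 * a ^ 2)
    (hab : a ^ 2 ≤ 3 * b ^ 2) {p q p' q' : ℤ} (hpq : p % 2 = q % 2) (hpq' : p' % 2 = q' % 2)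
    (hne : (p, q) ≠ (p', q')) :
    √(a ^ 2 + b ^ 2) ≤ dist (checkerboardPoint a b p q) (checkerboardPoint a b p' q') := by
  have key := sq_add_sq_le_of_emod_two_eq hba hab (p := p - p') (q := q - q') (by omega)
    (by contrapose! hne; ext <;> simp only <;> linarith)
  rw [checkerboardPoint, checkerboardPoint, dist_toLp_fin_two]
  refine Real.sqrt_le_sqrt (le_of_le_of_eq key ?_)
  simp only [Matrix.cons_val_zero, Matrix.cons_val_one, Int.cast_sub]
  ring

/-- `⟨j, r⟩` is the `r`-th disk of column `j`. -/
def alternatingColumnsIndex (k : ℕ) : Finset (Σ _ : ℕ, ℕ) :=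
  (range (k + 1)).sigma fun j => range (k - j % 2)

lemma card_alternatingColumnsIndex {k : ℕ} (hk : 1 ≤ k) :
    #(alternatingColumnsIndex k) = k ^ 2 + k / 2 := by
  rw [alternatingColumnsIndex, card_sigma]
  simp only [card_range]
  rw [sum_range_sub_mod_two hk, show (k + 1) * k = k ^ 2 + k by ring]
  omega

noncomputable def alternatingColumns (k : ℕ) (x : Σ _ : ℕ, ℕ) : EuclideanSpace ℝ (Fin 2) :=
  checkerboardPoint (1 / k) (1 / (2 * ((k : ℝ) - 1))) x.1 (2 * x.2 + x.1 % 2 : ℕ)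

lemma alternatingColumns_mem_Icc {k : ℕ} (hk : 2 ≤ k) {x : Σ _ : ℕ, ℕ}
    (hx : x ∈ alternatingColumnsIndex k) (t : Fin 2) :
    alternatingColumns k x t ∈ Set.Icc 0 1 := by
  simp only [alternatingColumnsIndex, mem_sigma, mem_range] at hx
  have hk' : (2 : ℝ) ≤ k := by exact_mod_cast hk
  fin_cases t <;>
    simp only [alternatingColumns, checkerboardPoint, Fin.zero_eta, Fin.mk_one, PiLp.toLp_apply,
      Matrix.cons_val_zero, Matrix.cons_val_one, Int.cast_natCast, one_div_mul_eq_div] <;>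
    refine ⟨div_nonneg (by positivity) (by linarith), (div_le_one (by linarith)).mpr ?_⟩
  · exact_mod_cast Nat.lt_succ_iff.mp hx.1
  · have : 2 * x.2 + x.1 % 2 + 2 ≤ 2 * k := by omega
    have : ((2 * x.2 + x.1 % 2 : ℕ) : ℝ) + 2 ≤ 2 * k := by exact_mod_cast this
    linarith

lemma sqrt_sq_add_sq_le_dist_alternatingColumns {k : ℕ} (hk : 2 ≤ k) (hk' : k ≤ 7)
    {x y : Σ _ : ℕ, ℕ} (hxy : x ≠ y) :
    √((1 / k) ^ 2 + (1 / (2 * ((k : ℝ) - 1))) ^ 2) ≤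
      dist (alternatingColumns k x) (alternatingColumns k y) := by
  have hk2 : (2 : ℝ) ≤ k := by exact_mod_cast hk
  have hk7 : (k : ℝ) ≤ 7 := by exact_mod_cast hk'
  have hk1 : (0 : ℝ) < 2 * ((k : ℝ) - 1) := by linarith
  apply sqrt_sq_add_sq_le_dist_checkerboardPoint
  · rw [div_pow, div_pow, one_pow, mul_one_div, div_le_div_iff₀ (by positivity) (by positivity)]
    nlinarith
  · rw [div_pow, div_pow, one_pow, mul_one_div, div_le_div_iff₀ (by positivity) (by positivity)]
    nlinarith
  · omega
  · omega
  · obtain ⟨j, r⟩ := x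
    obtain ⟨j', r'⟩ := y
    contrapose! hxy
    simp only [Prod.mk.injEq] at hxy
    obtain rfl : j = j' := by omega
    obtain rfl : r = r' := by omega
    rfl

lemma sqrt_five_mul_sq_sub_eight_mul_add_four_div {k : ℝ} (hk : 1 < k) :
    √(5 * k ^ 2 - 8 * k + 4) / (2 * k * (k - 1)) = √((1 / k) ^ 2 + (1 / (2 * (k - 1))) ^ 2) := by
  have hk0 : k ≠ 0 := by positivity
  have hk1 : k - 1 ≠ 0 := sub_ne_zero.mpr hk.ne'
  rw [← Real.sqrt_sq (show 0 ≤ 2 * k * (k - 1) by nlinarith), ← Real.sqrt_div' _ (sq_nonneg _)]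
  congr 1
  field_simp
  ring

/-- For every integer `k` with `2 ≤ k ≤ 7` there exist `k² + ⌊k/2⌋` points in the
closed unit square whose pairwise distances are all at least
`√(5k² - 8k + 4)/(2k(k-1))`. -/
theorem stmt_14 (k : ℕ) (hk : 2 ≤ k) (hk' : k ≤ 7) :
    ∃ f : Fin (k ^ 2 + k / 2) → EuclideanSpace ℝ (Fin 2),
      (∀ i t, f i t ∈ Set.Icc (0 : ℝ) 1) ∧
      ∀ i j, i ≠ j →
        Real.sqrt (5 * (k : ℝ) ^ 2 - 8 * k + 4) / (2 * k * ((k : ℝ) - 1)) ≤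
          dist (f i) (f j) := by
  let e := (alternatingColumnsIndex k).equivFinOfCardEq (card_alternatingColumnsIndex (by omega))
  refine ⟨fun i => alternatingColumns k (e.symm i),
    fun i => alternatingColumns_mem_Icc hk (e.symm i).2, fun i j hij => ?_⟩
  rw [sqrt_five_mul_sq_sub_eight_mul_add_four_div (by exact_mod_cast hk)]
  exact sqrt_sq_add_sq_le_dist_alternatingColumns hk hk'
    (Subtype.val_injective.ne (e.symm.injective.ne hij))
end
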